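/- Let A be a unital C*-algebra and h, h' positive invertible elements of Mₘ(A) that are compatible (each entry of h commutes with each entry of h') and commute as matrices (h h' = h' h). Then h h' is positive invertible and det(h h') = det(h) det(h') = det(h') det(h), where det(k) := exp(Tr(log k)). -/

import Mathlib

/-!
Positive elements have nonnegative spectrum in any star-ordered ring with a real functional
calculus, and then commuting positive elements have a positive product. Since `h` and `h'`
commute, so do `log h` and `log h'`, and exponentiating shows `log (h h') = log h + log h'`.
Compatibility passes to the logarithms: an element `z` of `A` commutes with every entry of a
matrix exactly when the scalar matrix `diagonal fun _ => z` commutes with it, and commuting with a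
fixed element survives the functional calculus. Hence `Tr (log h)` and `Tr (log h')` commute in
`A`, and `exp` turns the trace of the sum into the product of the determinants, in either order.
-/

/-- For `g = min · 0`, the conjugate `g(a) a g(a)` of `a ≥ 0` is `≥ 0`, yet it is
`cfc (fun x => x * min x 0 ^ 2) a ≤ 0`; so that function vanishes on the spectrum of `a`. -/
theorem NonnegSpectrumClass.of_cfc (M : Type*) [Ring M] [StarRing M] [PartialOrder M]
    [StarOrderedRing M] [TopologicalSpace M] [Algebra ℝ M]
    [ContinuousFunctionalCalculus ℝ M IsSelfAdjoint] : NonnegSpectrumClass ℝ M := by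
  refine .of_spectrum_nonneg fun a ha t ht => ?_
  have hsa : IsSelfAdjoint a := ha.isSelfAdjoint
  set g : ℝ → ℝ := fun x => min x 0
  have hconj : star (cfc g a) * a * cfc g a = cfc (fun x => g x * x * g x) a := by
    rw [cfc_mul (fun x => g x * x) g a, cfc_mul g (fun x => x) a, cfc_id' ℝ a,
      (cfc_predicate g a).star_eq]
  have hzero : cfc (fun x => g x * x * g x) a = cfc (fun _ => 0 : ℝ → ℝ) a := by
    refine (cfc_const_zero ℝ a).symm ▸ le_antisymm (cfc_nonpos _ a fun x _ => ?_)
      (hconj ▸ star_left_conjugate_nonneg ha _)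
    rcases le_total 0 x with hx | hx <;> simp [g, hx]
    nlinarith
  have hcube : min t 0 * t * min t 0 = 0 := (eqOn_of_cfc_eq_cfc hzero) ht
  by_contra! hneg
  rw [min_eq_left hneg.le] at hcube
  nlinarith [mul_pos_of_neg_of_neg hneg hneg]

section Normed

variable {M : Type*} [NormedRing M] [StarRing M] [NormedAlgebra ℝ M] [CompleteSpace M]
  [ContinuousFunctionalCalculus ℝ M IsSelfAdjoint]

theorem cfc_exp_add_of_commute {a b : M} (ha : IsSelfAdjoint a) (hb : IsSelfAdjoint b)
    (hab : Commute a b) : cfc Real.exp (a + b) = cfc Real.exp a * cfc Real.exp b := by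
  let : NormedAlgebra ℚ M := .restrictScalars ℚ ℝ M
  rw [CFC.real_exp_eq_normedSpace_exp (ha.add hb), CFC.real_exp_eq_normedSpace_exp ha,
    CFC.real_exp_eq_normedSpace_exp hb, NormedSpace.exp_add_of_commute hab]

theorem CFC.log_mul_of_commute [PartialOrder M] [StarOrderedRing M] [NonnegSpectrumClass ℝ M]
    {a b : M} (ha : IsStrictlyPositive a) (hb : IsStrictlyPositive b) (hab : Commute a b) :
    log (a * b) = log a + log b := by
  have hlog : Commute (log a) (log b) := ((hab.cfc_real Real.log).symm.cfc_real Real.log).symm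
  let : NormedAlgebra ℚ M := .restrictScalars ℚ ℝ M
  conv_lhs => rw [← exp_log a, ← exp_log b, ← NormedSpace.exp_add_of_commute hlog]
  exact log_exp _

end Normed

namespace Matrix

variable {n A : Type*} [Fintype n]

theorem isSelfAdjoint_trace [AddCommMonoid A] [StarAddMonoid A] {a : Matrix n n A}
    (ha : IsSelfAdjoint a) : IsSelfAdjoint a.trace := by
  rw [IsSelfAdjoint, ← trace_conjTranspose, ← star_eq_conjTranspose, ha.star_eq]

theorem commute_trace [Semiring A] {a b : Matrix n n A} (h : ∀ i j, Commute (a i i) (b j j)) :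
    Commute a.trace b.trace :=
  .sum_left _ _ _ fun i _ => .sum_right _ _ _ fun j _ => h i j

variable [DecidableEq n]

theorem commute_diagonal_const_iff [Ring A] {a : Matrix n n A} {z : A} :
    Commute a (diagonal fun _ => z) ↔ ∀ i j, Commute (a i j) z := by
  simp only [Commute, SemiconjBy, ← Matrix.ext_iff, mul_diagonal, diagonal_mul]

theorem commute_cfc_apply [Ring A] [StarRing A] [Algebra ℝ A] [TopologicalSpace A]
    [IsTopologicalRing A] [T2Space A] [ContinuousFunctionalCalculus ℝ (Matrix n n A) IsSelfAdjoint]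
    {a : Matrix n n A} {z : A} (ha : ∀ i j, Commute (a i j) z) (f : ℝ → ℝ) (i j : n) :
    Commute (cfc f a i j) z :=
  commute_diagonal_const_iff.mp ((commute_diagonal_const_iff.mpr ha).cfc_real f) i j

theorem cfc_log_mul_of_commute [NormedRing A] [StarRing A] [NormedAlgebra ℝ A] [CompleteSpace A]
    [PartialOrder (Matrix n n A)] [StarOrderedRing (Matrix n n A)]
    [NonnegSpectrumClass ℝ (Matrix n n A)]
    [ContinuousFunctionalCalculus ℝ (Matrix n n A) IsSelfAdjoint]
    {a b : Matrix n n A} (ha : IsStrictlyPositive a) (hb : IsStrictlyPositive b)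
    (hab : Commute a b) : cfc Real.log (a * b) = cfc Real.log a + cfc Real.log b := by
  have hcomplete : CompleteSpace (Matrix n n A) := inferInstance
  let : NormedRing (Matrix n n A) := Matrix.linftyOpNormedRing
  let : NormedAlgebra ℝ (Matrix n n A) := Matrix.linftyOpNormedAlgebra
  -- The operator norm induces the product topology and uniformity only up to unfolding, so
  -- completeness and the functional calculus have to be handed over explicitly.
  have : @CompleteSpace (Matrix n n A) PseudoMetricSpace.toUniformSpace := hcomplete
  exact @CFC.log_mul_of_commute _ _ _ _ _ ‹_› _ _ _ _ _ ha hb hab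

end Matrix

theorem cstar_det_mul_general {A : Type*} [CStarAlgebra A]
    {m : ℕ}
    [PartialOrder (Matrix (Fin m) (Fin m) A)]
    [StarOrderedRing (Matrix (Fin m) (Fin m) A)]
    [ContinuousFunctionalCalculus ℝ (Matrix (Fin m) (Fin m) A) IsSelfAdjoint]
    (h h' : Matrix (Fin m) (Fin m) A)
    (hpos : 0 ≤ h) (hinv : IsUnit h) (hpos' : 0 ≤ h') (hinv' : IsUnit h')
    (hcompat : ∀ i j k l, Commute (h i j) (h' k l))
    (hcomm : h * h' = h' * h) :
    (0 ≤ h * h' ∧ IsUnit (h * h')) ∧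
      cfc Real.exp (Matrix.trace (cfc Real.log (h * h'))) =
        cfc Real.exp (Matrix.trace (cfc Real.log h)) *
          cfc Real.exp (Matrix.trace (cfc Real.log h')) ∧
      cfc Real.exp (Matrix.trace (cfc Real.log h)) *
          cfc Real.exp (Matrix.trace (cfc Real.log h')) =
        cfc Real.exp (Matrix.trace (cfc Real.log h')) *
          cfc Real.exp (Matrix.trace (cfc Real.log h)) := by
  have := NonnegSpectrumClass.of_cfc (Matrix (Fin m) (Fin m) A)
  set x := cfc Real.log h
  set y := cfc Real.log h'
  have hxh' : ∀ k l i j, Commute (x i j) (h' k l) := fun k l =>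
    Matrix.commute_cfc_apply (fun i j => hcompat i j k l) Real.log
  have hxy : ∀ i j k l, Commute (x i j) (y k l) := fun i j k l =>
    (Matrix.commute_cfc_apply (fun k l => (hxh' k l i j).symm) Real.log k l).symm
  have htr : Commute x.trace y.trace := Matrix.commute_trace fun i j => hxy i i j j
  have hx : IsSelfAdjoint x.trace := Matrix.isSelfAdjoint_trace (cfc_predicate _ h)
  have hy : IsSelfAdjoint y.trace := Matrix.isSelfAdjoint_trace (cfc_predicate _ h')
  refine ⟨⟨Commute.mul_nonneg hpos hpos' hcomm, hinv.mul hinv'⟩, ?_, ?_⟩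
  · rw [Matrix.cfc_log_mul_of_commute (hinv.isStrictlyPositive hpos)
      (hinv'.isStrictlyPositive hpos') hcomm, Matrix.trace_add, cfc_exp_add_of_commute hx hy htr]
  · exact ((htr.cfc_real Real.exp).symm.cfc_real Real.exp).symm

/-- Let `A` be a unital C*-algebra and `h, h'` positive invertible elements of `Mₘ(A)`
that are compatible (each entry of `h` commutes with each entry of `h'`) and commute as
matrices. Then `h h'` is positive invertible and
`det (h h') = det h · det h' = det h' · det h`, where `det k := exp (Tr (log k))`. -/
theorem cstar_det_mul {A : Type*} [CStarAlgebra A]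
    [PartialOrder A] [StarOrderedRing A] {m : ℕ}
    [PartialOrder (Matrix (Fin m) (Fin m) A)]
    [StarOrderedRing (Matrix (Fin m) (Fin m) A)]
    [ContinuousFunctionalCalculus ℝ (Matrix (Fin m) (Fin m) A) IsSelfAdjoint]
    (h h' : Matrix (Fin m) (Fin m) A)
    (hpos : 0 ≤ h) (hinv : IsUnit h) (hpos' : 0 ≤ h') (hinv' : IsUnit h')
    (hcompat : ∀ i j k l, Commute (h i j) (h' k l))
    (hcomm : h * h' = h' * h) :
    (0 ≤ h * h' ∧ IsUnit (h * h')) ∧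
      cfc Real.exp (Matrix.trace (cfc Real.log (h * h'))) =
        cfc Real.exp (Matrix.trace (cfc Real.log h)) *
          cfc Real.exp (Matrix.trace (cfc Real.log h')) ∧
      cfc Real.exp (Matrix.trace (cfc Real.log h)) *
          cfc Real.exp (Matrix.trace (cfc Real.log h')) =
        cfc Real.exp (Matrix.trace (cfc Real.log h')) *
          cfc Real.exp (Matrix.trace (cfc Real.log h)) :=
  cstar_det_mul_general h h' hpos hinv hpos' hinv' hcompat hcomm
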